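/- Define q : ℍ → ℝ by q(w) = (4·Im(w)/(π·|w|⁴)) · (Im(w) + Re(w)·(π/2 − arg(w))), where arg denotes the principal argument (taking values in (0, π) on ℍ). Then for every w ∈ ℍ, writing r = |w| and θ = arg(w) ∈ (0, π), one has 0 < q(w) ≤ (4/π) · θ(π − θ) / r². -/

import Mathlib

/-!
In polar coordinates `w = r e^{iθ}` the density is `q(w) = (4 / (π r²)) sin θ · (sin θ + (π/2 - θ) cos θ)`.
On `[0, π]` the term `(π/2 - θ) cos θ` is nonnegative, which gives positivity, and at most
`|π/2 - θ|`, so the second factor is at most `π/2`. Since `sin θ ≤ min θ (π - θ)` and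
`max θ (π - θ) ≥ π/2`, the product is at most `θ (π - θ)`.
-/

open Real

/-- The density `q(ℍ; 0, ∞; ·)` of Lemma 4.2:
`q(w) = (4 Im w/(π|w|⁴)) (Im w + Re w (π/2 − arg w))`. -/
noncomputable def qDensity (w : ℂ) : ℝ :=
  4 * w.im / (π * ‖w‖ ^ 4) * (w.im + w.re * (π / 2 - Complex.arg w))

lemma Complex.arg_mem_Ioo_of_im_pos {w : ℂ} (hw : 0 < w.im) : Complex.arg w ∈ Set.Ioo 0 π := by
  refine ⟨(Complex.arg_nonneg_iff.2 hw.le).lt_of_ne fun h => ?_,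
    Complex.arg_lt_pi_iff.2 (Or.inr hw.ne')⟩
  simpa [← Complex.norm_mul_sin_arg w, ← h] using hw.ne'

lemma Real.sin_le_pi_sub {θ : ℝ} (h : θ ≤ π) : sin θ ≤ π - θ := by
  simpa [sin_pi_sub] using sin_le (sub_nonneg.2 h)

lemma Real.pi_div_two_sub_mul_cos_nonneg {θ : ℝ} (h₀ : -(π / 2) ≤ θ) (h₁ : θ ≤ π + π / 2) :
    0 ≤ (π / 2 - θ) * cos θ := by
  rcases le_total θ (π / 2) with h | h
  · exact mul_nonneg (by linarith) (cos_nonneg_of_mem_Icc ⟨h₀, h⟩)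
  · exact mul_nonneg_of_nonpos_of_nonpos (by linarith) (cos_nonpos_of_pi_div_two_le_of_le h h₁)

noncomputable def qAngular (θ : ℝ) : ℝ := sin θ + (π / 2 - θ) * cos θ

lemma qDensity_eq (w : ℂ) :
    qDensity w = 4 / π * (sin (Complex.arg w) * qAngular (Complex.arg w)) / ‖w‖ ^ 2 := by
  rcases eq_or_ne w 0 with rfl | hw
  · simp [qDensity]
  have hr : ‖w‖ ≠ 0 := norm_ne_zero_iff.2 hw
  rw [qDensity, qAngular, ← Complex.norm_mul_cos_arg w, ← Complex.norm_mul_sin_arg w]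
  field_simp

lemma qAngular_pos {θ : ℝ} (h₀ : 0 < θ) (h₁ : θ < π) : 0 < qAngular θ :=
  add_pos_of_pos_of_nonneg (sin_pos_of_pos_of_lt_pi h₀ h₁)
    (pi_div_two_sub_mul_cos_nonneg (by linarith [pi_pos]) (by linarith [pi_pos]))

lemma qAngular_le_pi_div_two {θ : ℝ} (h₀ : 0 ≤ θ) (h₁ : θ ≤ π) : qAngular θ ≤ π / 2 := by
  have hcos := abs_le.1 (abs_cos_le_one θ)
  unfold qAngular
  rcases le_total θ (π / 2) with h | h
  · nlinarith [sin_le h₀]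
  · nlinarith [sin_le_pi_sub h₁]

lemma sin_mul_qAngular_le {θ : ℝ} (h₀ : 0 < θ) (h₁ : θ < π) :
    sin θ * qAngular θ ≤ θ * (π - θ) := by
  have hq := qAngular_le_pi_div_two h₀.le h₁.le
  have hq₀ := (qAngular_pos h₀ h₁).le
  rcases le_total θ (π / 2) with h | h
  · nlinarith [mul_le_mul (sin_le h₀.le) hq hq₀ h₀.le]
  · nlinarith [mul_le_mul (sin_le_pi_sub h₁.le) hq hq₀ (by linarith : 0 ≤ π - θ)]

theorem qDensity_pos_and_le (w : ℂ) (hw : 0 < w.im) :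
    0 < qDensity w ∧
      qDensity w ≤ 4 / π * (Complex.arg w * (π - Complex.arg w)) / ‖w‖ ^ 2 := by
  obtain ⟨h₀, h₁⟩ := Complex.arg_mem_Ioo_of_im_pos hw
  have hr : 0 < ‖w‖ := norm_pos_iff.2 fun h => by simp [h] at hw
  rw [qDensity_eq]
  refine ⟨?_, ?_⟩
  · have := mul_pos (sin_pos_of_pos_of_lt_pi h₀ h₁) (qAngular_pos h₀ h₁)
    positivity
  · gcongr 4 / π * ?_ / _
    exact sin_mul_qAngular_le h₀ h₁
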